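/- Let ε > 0, α > 0, k > 0, h > 0, z > k·h, V ≥ 0 and u ≥ 0. Then there exists S* ∈ [0, ∞) such that for every S ≥ −h: u·S − φ(V + z + k·S, S) ≤ u·S* − φ(V + z + k·S*, S*). That is, the supremum of S ↦ u·S − Φ(V, S) over [−h, ∞) is attained at some nonnegative S*. -/
import Mathlib


/-- The imaginary error function, `erfi x = ∫ u in 0..x, exp (u²)`
(the conventional erfi scaled by `√π / 2`). -/
noncomputable def erfi (x : ℝ) : ℝ := ∫ u in (0:ℝ)..x, Real.exp (u ^ 2)

/-- The potential function `φ(x, y) = ε·√(α·x)·(2·∫₀^{y/√(4αx)} erfi(u) du − 1)`. -/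
noncomputable def phi (ε α x y : ℝ) : ℝ :=
  ε * Real.sqrt (α * x) *
    (2 * (∫ u in (0:ℝ)..(y / Real.sqrt (4 * α * x)), erfi u) - 1)

lemma erfi_continuous : Continuous erfi := by
  unfold erfi
  exact intervalIntegral.continuous_primitive
    (fun a b => ((Real.continuous_exp.comp (continuous_pow 2)).intervalIntegrable a b)) 0

lemma E_continuous : Continuous (fun t => ∫ u in (0:ℝ)..t, erfi u) :=
  intervalIntegral.continuous_primitive (fun a b => erfi_continuous.intervalIntegrable a b) 0

lemma erfi_nonneg {x : ℝ} (hx : 0 ≤ x) : 0 ≤ erfi x := by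
  unfold erfi
  exact intervalIntegral.integral_nonneg hx (fun u _ => (Real.exp_pos _).le)

lemma erfi_nonpos {x : ℝ} (hx : x ≤ 0) : erfi x ≤ 0 := by
  unfold erfi
  rw [intervalIntegral.integral_symm]
  simp only [neg_nonpos]
  exact intervalIntegral.integral_nonneg hx (fun u _ => (Real.exp_pos _).le)

lemma E_nonneg (t : ℝ) : 0 ≤ ∫ u in (0:ℝ)..t, erfi u := by
  rcases le_total 0 t with h | h
  · exact intervalIntegral.integral_nonneg h (fun u hu => erfi_nonneg hu.1)
  · rw [intervalIntegral.integral_symm, neg_nonneg]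
    have : ∫ u in t..(0:ℝ), erfi u ≤ ∫ u in t..(0:ℝ), (0:ℝ) := by
      apply intervalIntegral.integral_mono_on h (erfi_continuous.intervalIntegrable t 0)
        intervalIntegrable_const
      intro u hu; exact erfi_nonpos hu.2
    simpa using this

lemma self_le_erfi {x : ℝ} (hx : 0 ≤ x) : x ≤ erfi x := by
  unfold erfi
  calc x = ∫ _ in (0:ℝ)..x, (1:ℝ) := by simp
    _ ≤ ∫ u in (0:ℝ)..x, Real.exp (u ^ 2) := by
        apply intervalIntegral.integral_mono_on hx (intervalIntegrable_const)
          ((Real.continuous_exp.comp (continuous_pow 2)).intervalIntegrable 0 x)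
        intro u _
        exact Real.one_le_exp (sq_nonneg u)

lemma sq_half_le_E {t : ℝ} (ht : 0 ≤ t) : t ^ 2 / 2 ≤ ∫ u in (0:ℝ)..t, erfi u := by
  calc t ^ 2 / 2 = ∫ u in (0:ℝ)..t, u := by rw [integral_id]; ring
    _ ≤ ∫ u in (0:ℝ)..t, erfi u := by
        apply intervalIntegral.integral_mono_on ht (continuous_id.intervalIntegrable 0 t)
          (erfi_continuous.intervalIntegrable 0 t)
        intro u hu
        exact self_le_erfi hu.1

lemma phi_lower_neg (ε α x y : ℝ) (hε : 0 < ε) : -(ε * Real.sqrt (α * x)) ≤ phi ε α x y := by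
  have hE := E_nonneg (y / Real.sqrt (4 * α * x))
  have hr := Real.sqrt_nonneg (α * x)
  unfold phi
  nlinarith [mul_nonneg (mul_nonneg hε.le hr) hE]

lemma phi_lower (ε α x S : ℝ) (hε : 0 < ε) (hα : 0 < α) (hx : 0 < x) (hS : 0 ≤ S) :
    ε * (S ^ 2 / (4 * Real.sqrt (α * x))) - ε * Real.sqrt (α * x) ≤ phi ε α x S := by
  set r := Real.sqrt (α * x) with hrdef
  have hax : 0 < α * x := mul_pos hα hx
  have hr : 0 < r := Real.sqrt_pos.2 hax
  have hr2 : r ^ 2 = α * x := Real.sq_sqrt hax.le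
  set t := S / Real.sqrt (4 * α * x) with htdef
  have h4 : (0:ℝ) < 4 * α * x := by nlinarith
  have hrt : 0 < Real.sqrt (4 * α * x) := Real.sqrt_pos.2 h4
  have ht : 0 ≤ t := div_nonneg hS hrt.le
  have ht2 : t ^ 2 = S ^ 2 / (4 * (α * x)) := by
    rw [htdef, div_pow, Real.sq_sqrt h4.le]; ring_nf
  have hE : t ^ 2 / 2 ≤ ∫ u in (0:ℝ)..t, erfi u := sq_half_le_E ht
  have key : r * t ^ 2 = S ^ 2 / (4 * r) := by
    rw [ht2]; field_simp; nlinarith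
  unfold phi
  rw [← htdef, ← hrdef]
  nlinarith [mul_le_mul_of_nonneg_left hE (mul_pos hε hr).le]


set_option maxHeartbeats 1000000 in
/-- The supremum of `S ↦ u·S − Φ(V, S)` over `[−h, ∞)` is attained at some
nonnegative `S*`, where `Φ(V, S) = φ(V + z + k·S, S)`. -/
theorem sup_attained_nonneg (ε α k h z V u : ℝ)
    (hε : 0 < ε) (hα : 0 < α) (hk : 0 < k) (hh : 0 < h) (hz : k * h < z)
    (hV : 0 ≤ V) (hu : 0 ≤ u) :
    ∃ Sstar : ℝ, 0 ≤ Sstar ∧ ∀ S : ℝ, -h ≤ S →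
      u * S - phi ε α (V + z + k * S) S ≤
        u * Sstar - phi ε α (V + z + k * Sstar) Sstar := by
  set f : ℝ → ℝ := fun S => u * S - phi ε α (V + z + k * S) S with hf
  set A : ℝ := Real.sqrt (α * (V + z + k)) with hA
  set B : ℝ := Real.sqrt (α * (V + z)) with hB
  have hkh : 0 < k * h := mul_pos hk hh
  have hApos : 0 < A := Real.sqrt_pos.2 (by nlinarith)
  have hBpos : 0 < B := Real.sqrt_pos.2 (by nlinarith)
  set M : ℝ := max 1 ((4 * A * (u + ε * A + ε * B) / ε) ^ 2) with hM
  have hM1 : (1:ℝ) ≤ M := le_max_left _ _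
  have hxpos : ∀ S : ℝ, -h ≤ S → 0 < V + z + k * S := by
    intro S hS
    nlinarith [mul_le_mul_of_nonneg_left hS hk.le]
  have hf0 : f 0 = ε * B := by
    simp only [hf, hB, phi, mul_zero, add_zero, zero_div, intervalIntegral.integral_same]
    ring
  have claimA : ∀ S : ℝ, -h ≤ S → S ≤ 0 → f S ≤ f 0 := by
    intro S hS hS0
    rw [hf0]
    have h1 : -(ε * Real.sqrt (α * (V + z + k * S))) ≤ phi ε α (V + z + k * S) S :=
      phi_lower_neg _ _ _ _ hε
    have h2 : Real.sqrt (α * (V + z + k * S)) ≤ B := by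
      rw [hB]
      apply Real.sqrt_le_sqrt
      nlinarith [mul_nonpos_of_nonneg_of_nonpos hk.le hS0]
    have h3 : u * S ≤ 0 := mul_nonpos_of_nonneg_of_nonpos hu hS0
    simp only [hf]
    nlinarith
  have claimB : ∀ S : ℝ, M ≤ S → f S ≤ f 0 := by
    intro S hSM
    have hS1 : (1:ℝ) ≤ S := le_trans hM1 hSM
    have hS0 : (0:ℝ) ≤ S := by linarith
    set w : ℝ := Real.sqrt S with hw
    have hw2 : w ^ 2 = S := Real.sq_sqrt hS0
    have hw1 : (1:ℝ) ≤ w := by rw [hw]; exact Real.one_le_sqrt.2 hS1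
    have hw0 : (0:ℝ) < w := by linarith
    have hS' : S = w * w := by rw [← hw2]; ring
    set c : ℝ := 4 * A * (u + ε * A + ε * B) / ε with hcdef
    have hcnn : 0 ≤ c := by positivity
    have h1 : c ≤ w := by
      rw [hw, ← Real.sqrt_sq hcnn]
      exact Real.sqrt_le_sqrt (le_trans (le_max_right 1 _) hSM)
    have hc : 4 * A * (u + ε * A + ε * B) ≤ w * ε := (div_le_iff₀ hε).1 h1
    have hx : 0 < V + z + k * S := hxpos S (by linarith)
    set r : ℝ := Real.sqrt (α * (V + z + k * S)) with hrdef
    have hrpos : 0 < r := Real.sqrt_pos.2 (mul_pos hα hx)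
    have hVz : (0:ℝ) < V + z := by nlinarith
    have hrA : r ≤ A * w := by
      calc r ≤ Real.sqrt (α * (V + z + k) * S) := by
              apply Real.sqrt_le_sqrt
              nlinarith [mul_le_mul_of_nonneg_left hS1 hVz.le]
        _ = A * w := by
              rw [hA, hw, ← Real.sqrt_mul (by nlinarith : (0:ℝ) ≤ α * (V + z + k)) S]
    have hphi := phi_lower ε α (V + z + k * S) S hε hα hx hS0
    rw [hf0]
    simp only [hf]
    rw [← hrdef] at hphi
    have h5 : r * r ≤ (A * w) * (A * w) := mul_self_le_mul_self hrpos.le hrA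
    have h6 : 4 * A * (u + ε * A + ε * B) * (w * w * w) ≤ w * ε * (w * w * w) :=
      mul_le_mul_of_nonneg_right hc (by positivity)
    have h7 : r * (w * w) ≤ A * w * (w * w) :=
      mul_le_mul_of_nonneg_right hrA (by positivity)
    have h9 : (A * w) * (A * w) ≤ (A * w) * (A * w) * w :=
      le_mul_of_one_le_right (by positivity) hw1
    have hA1 := mul_le_mul_of_nonneg_left h7 hu
    have hA2 := mul_le_mul_of_nonneg_left h5 hε.le
    have hA3 := mul_le_mul_of_nonneg_left h9 hε.le
    have hA5 : 0 ≤ ε * r * B := by positivity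
    have hA6 : 0 ≤ ε * (A * B) * (w * w * w) := by positivity
    have key : 4 * r * (u * S + ε * r - ε * B) ≤ ε * S ^ 2 := by
      rw [hS']
      nlinarith [hA1, hA2, hA3, hA5, hA6, h6]
    have key2 : u * S + ε * r - ε * B ≤ ε * (S ^ 2 / (4 * r)) := by
      rw [mul_div_assoc' ε _ _, le_div_iff₀ (by linarith)]
      linarith [key]
    linarith
  have hcont : ContinuousOn f (Set.Icc 0 M) := by
    have c0 : Continuous fun S : ℝ => V + z + k * S := by continuity
    have c1 : Continuous fun S : ℝ => Real.sqrt (α * (V + z + k * S)) :=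
      Real.continuous_sqrt.comp (continuous_const.mul c0)
    have c2 : Continuous fun S : ℝ => Real.sqrt (4 * α * (V + z + k * S)) :=
      Real.continuous_sqrt.comp (continuous_const.mul c0)
    have c3 : ContinuousOn (fun S : ℝ => S / Real.sqrt (4 * α * (V + z + k * S)))
        (Set.Icc 0 M) := by
      apply ContinuousOn.div continuousOn_id c2.continuousOn
      intro S hS
      refine ne_of_gt (Real.sqrt_pos.2 ?_)
      have := hxpos S (by linarith [hS.1])
      nlinarith
    simp only [hf, phi]
    exact ((continuous_const.mul continuous_id).continuousOn).sub
      (((continuous_const.mul c1).continuousOn).mul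
        ((continuousOn_const.mul (E_continuous.comp_continuousOn c3)).sub continuousOn_const))
  obtain ⟨Sstar, hSmem, hmax⟩ :=
    isCompact_Icc.exists_isMaxOn (Set.nonempty_Icc.2 (by linarith)) hcont
  refine ⟨Sstar, hSmem.1, fun S hS => ?_⟩
  rcases le_total S 0 with hc | hc
  · exact le_trans (claimA S hS hc) (hmax ⟨le_refl 0, by linarith⟩)
  · rcases le_total S M with hc2 | hc2
    · exact hmax ⟨hc, hc2⟩
    · exact le_trans (claimB S hc2) (hmax ⟨le_refl 0, by linarith⟩)
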